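/- Let P ∈ P^2 be a point with all coordinates nonzero and let Q = [q_0:q_1:0] with q_0 q_1 ≠ 0 (so Q ∈ Δ_1 \ Δ_0). Then for all integers m > 1 and n ≥ 1, I(P)^m ⋆ I(Q)^n ≠ I(P ⋆ Q)^{m+n−1}; indeed x_2^n ∈ I(P)^m ⋆ I(Q)^n but x_2^n ∉ I(P ⋆ Q)^{m+n−1}. -/

import Mathlib

open MvPolynomial

noncomputable section

variable {K : Type*} [Field K]

/-- The Hadamard product of two ideals `I, J ⊆ K[x_0,x_1,x_2]`: introduce new variables
`y_0,y_1,y_2` and `z_0,z_1,z_2` (encoded via a sum type), map `I` via `x_i ↦ y_i`, `J` via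
`x_i ↦ z_i`, add the relations `x_i − y_i z_i`, and eliminate `y, z` (i.e. take the
preimage in `K[x_0,x_1,x_2]`). -/
def hadamard (I J : Ideal (MvPolynomial (Fin 3) K)) : Ideal (MvPolynomial (Fin 3) K) :=
  Ideal.comap
    (rename (Sum.inl : Fin 3 → Fin 3 ⊕ (Fin 3 ⊕ Fin 3)))
    (Ideal.map (rename (fun i : Fin 3 => (Sum.inr (Sum.inl i) : Fin 3 ⊕ (Fin 3 ⊕ Fin 3)))) I
      + Ideal.map (rename (fun i : Fin 3 => (Sum.inr (Sum.inr i) : Fin 3 ⊕ (Fin 3 ⊕ Fin 3)))) J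
      + Ideal.span { f | ∃ i : Fin 3,
          f = X (Sum.inl i) - X (Sum.inr (Sum.inl i)) * X (Sum.inr (Sum.inr i)) })

/-- The homogeneous vanishing ideal of the point `P = [p_0:p_1:p_2] ∈ ℙ²`, generated by
the forms `p_j x_i − p_i x_j`. -/
def pointIdeal (p : Fin 3 → K) : Ideal (MvPolynomial (Fin 3) K) :=
  Ideal.span { f | ∃ i j : Fin 3, f = C (p j) * X i - C (p i) * X j }

/-- The irrelevant ideal `𝔪 = ⟨x_0,x_1,x_2⟩` of `K[x_0,x_1,x_2]`. -/
def irrelevantIdeal (K : Type*) [Field K] : Ideal (MvPolynomial (Fin 3) K) :=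
  Ideal.span (Set.range X)

/-- Modulo the relations, `x_i^k = y_i^k z_i^k`, and `z_i^k` lies in the image of `J`. -/
theorem X_pow_mem_hadamard_of_mem_right {I J : Ideal (MvPolynomial (Fin 3) K)} {i : Fin 3}
    {k : ℕ} (h : X i ^ k ∈ J) : X i ^ k ∈ hadamard I J := by
  set x : MvPolynomial (Fin 3 ⊕ (Fin 3 ⊕ Fin 3)) K := X (Sum.inl i)
  set y : MvPolynomial (Fin 3 ⊕ (Fin 3 ⊕ Fin 3)) K := X (Sum.inr (Sum.inl i))
  set z : MvPolynomial (Fin 3 ⊕ (Fin 3 ⊕ Fin 3)) K := X (Sum.inr (Sum.inr i))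
  have hrel : x - y * z ∈ Ideal.span { f | ∃ i : Fin 3,
      f = X (Sum.inl i) - X (Sum.inr (Sum.inl i)) * X (Sum.inr (Sum.inr i)) } :=
    Ideal.subset_span ⟨i, rfl⟩
  have hz : z ^ k ∈ Ideal.map (rename (fun i : Fin 3 => (Sum.inr (Sum.inr i) :
      Fin 3 ⊕ (Fin 3 ⊕ Fin 3)))) J := by
    simpa only [map_pow, rename_X] using Ideal.mem_map_of_mem (rename _) h
  rw [hadamard, Ideal.mem_comap, map_pow, rename_X, ← sub_add_cancel (x ^ k) ((y * z) ^ k)]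
  refine Ideal.add_mem _ (Submodule.mem_sup_right ?_) (Submodule.mem_sup_left
    (Submodule.mem_sup_right (mul_pow y z k ▸ Ideal.mul_mem_left _ _ hz)))
  obtain ⟨c, hc⟩ := sub_dvd_pow_sub_pow x (y * z) k
  exact hc ▸ Ideal.mul_mem_right _ _ hrel

theorem X_mem_pointIdeal_of_eq_zero {q : Fin 3 → K} {i j : Fin 3} (hj : q j ≠ 0)
    (hi : q i = 0) : X i ∈ pointIdeal q := by
  have hgen : C (q j) * X i - C (q i) * X j ∈ pointIdeal q := Ideal.subset_span ⟨i, j, rfl⟩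
  rw [hi, C_0, zero_mul, sub_zero] at hgen
  simpa [← mul_assoc, ← C_mul, inv_mul_cancel₀ hj] using
    Ideal.mul_mem_left _ (C (q j)⁻¹) hgen

theorem pointIdeal_le_ker_eval (r : Fin 3 → K) : pointIdeal r ≤ RingHom.ker (eval r) := by
  rw [pointIdeal, Ideal.span_le]
  rintro _ ⟨i, j, rfl⟩
  simp [mul_comm]

/-- Restriction of a polynomial to the line `t ↦ r + t eᵢ` through `r` in direction `eᵢ`. -/
def restrictToLine (r : Fin 3 → K) (i : Fin 3) :
    MvPolynomial (Fin 3) K →ₐ[K] Polynomial K :=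
  aeval fun a => Polynomial.C (r a) + (Pi.single i Polynomial.X : Fin 3 → Polynomial K) a

theorem eval_zero_restrictToLine (r : Fin 3 → K) (i : Fin 3) (g : MvPolynomial (Fin 3) K) :
    (restrictToLine r i g).eval 0 = eval r g := by
  suffices h : (Polynomial.evalRingHom 0).comp (restrictToLine r i).toRingHom = eval r from
    RingHom.congr_fun h g
  refine MvPolynomial.ringHom_ext (fun c => by simp [restrictToLine]) (fun a => ?_)
  by_cases ha : a = i
  · subst ha; simp [restrictToLine]
  · simp [restrictToLine, Pi.single_apply, ha]

theorem map_pointIdeal_restrictToLine_le (r : Fin 3 → K) (i : Fin 3) :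
    (pointIdeal r).map (restrictToLine r i) ≤ Ideal.span {Polynomial.X} := by
  rw [Ideal.map_le_iff_le_comap]
  intro g hg
  rw [Ideal.mem_comap, Ideal.mem_span_singleton, Polynomial.X_dvd_iff,
    Polynomial.coeff_zero_eq_eval_zero, eval_zero_restrictToLine]
  exact pointIdeal_le_ker_eval r hg

/-- Along the line `r + t eᵢ` every element of `I(r)^k` vanishes to order `k` at `t = 0`,
while `xᵢ^n` restricts to `tⁿ`. -/
theorem X_pow_notMem_pointIdeal_pow {r : Fin 3 → K} {i : Fin 3} (hi : r i = 0) {n k : ℕ}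
    (hnk : n < k) : X i ^ n ∉ pointIdeal r ^ k := by
  intro hmem
  have hmap := Ideal.mem_map_of_mem (restrictToLine r i) hmem
  rw [Ideal.map_pow] at hmap
  have hdvd := pow_le_pow_left' (map_pointIdeal_restrictToLine_le r i) k hmap
  rw [Ideal.span_singleton_pow, Ideal.mem_span_singleton, map_pow] at hdvd
  have hXi : restrictToLine r i (X i) = Polynomial.X := by simp [restrictToLine, hi]
  rw [hXi, pow_dvd_pow_iff Polynomial.X_ne_zero Polynomial.not_isUnit_X] at hdvd
  omega

theorem hadamard_pow_pointIdeal_one_zero_coord_general (p : Fin 3 → K)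
    (q₀ q₁ : K) (hq : q₀ * q₁ ≠ 0)
    (m n : ℕ) (hm : 1 < m) :
    (X 2 : MvPolynomial (Fin 3) K) ^ n
        ∈ hadamard (pointIdeal p ^ m) (pointIdeal ![q₀, q₁, 0] ^ n) ∧
    (X 2 : MvPolynomial (Fin 3) K) ^ n
        ∉ pointIdeal (fun i => p i * ![q₀, q₁, 0] i) ^ (m + n - 1) ∧
    hadamard (pointIdeal p ^ m) (pointIdeal ![q₀, q₁, 0] ^ n)
        ≠ pointIdeal (fun i => p i * ![q₀, q₁, 0] i) ^ (m + n - 1) := by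
  have hX : X 2 ∈ pointIdeal ![q₀, q₁, 0] :=
    X_mem_pointIdeal_of_eq_zero (j := 0) (left_ne_zero_of_mul hq) rfl
  have hmem := X_pow_mem_hadamard_of_mem_right (I := pointIdeal p ^ m) (Ideal.pow_mem_pow hX n)
  have hnotMem : X 2 ^ n ∉ pointIdeal (fun i => p i * ![q₀, q₁, 0] i) ^ (m + n - 1) :=
    X_pow_notMem_pointIdeal_pow (by simp) (by omega)
  exact ⟨hmem, hnotMem, fun heq => hnotMem (heq ▸ hmem)⟩

/-- Let `P ∈ ℙ² \ Δ₁` (all coordinates nonzero) and `Q = [q_0:q_1:0]` with `q_0 q_1 ≠ 0`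
(so `Q ∈ Δ₁ \ Δ₀`). Then for all `m > 1` and `n ≥ 1`,
`x_2^n ∈ I(P)^m ⋆ I(Q)^n` but `x_2^n ∉ I(P ⋆ Q)^{m+n−1}`; in particular
`I(P)^m ⋆ I(Q)^n ≠ I(P ⋆ Q)^{m+n−1}`. -/
theorem hadamard_pow_pointIdeal_one_zero_coord [IsAlgClosed K] (p : Fin 3 → K)
    (hp : ∀ i, p i ≠ 0) (q₀ q₁ : K) (hq : q₀ * q₁ ≠ 0)
    (m n : ℕ) (hm : 1 < m) (hn : 1 ≤ n) :
    (X 2 : MvPolynomial (Fin 3) K) ^ n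
        ∈ hadamard (pointIdeal p ^ m) (pointIdeal ![q₀, q₁, 0] ^ n) ∧
    (X 2 : MvPolynomial (Fin 3) K) ^ n
        ∉ pointIdeal (fun i => p i * ![q₀, q₁, 0] i) ^ (m + n - 1) ∧
    hadamard (pointIdeal p ^ m) (pointIdeal ![q₀, q₁, 0] ^ n)
        ≠ pointIdeal (fun i => p i * ![q₀, q₁, 0] i) ^ (m + n - 1) :=
  hadamard_pow_pointIdeal_one_zero_coord_general p q₀ q₁ hq m n hm
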